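/- Let J ⊂ K[x_1,...,x_n] be an Artinian almost revlex ideal with Hilbert function H of R/J. Then for every s ≥ 0, the s-reduction number r_s = min{t : x_{n-s}^{t+1} ∈ J} equals c_s(H) := max{c : Δ^s H(j) > 0 for all 0 ≤ j ≤ c}, where Δ^s H is the s-th finite difference of H. In particular, r_0 = reg(J) - 1 = c_0(H). -/

import Mathlib

open Finset

/-- Total degree of a monomial (exponent vector). -/
def mdeg {n : ℕ} (α : Fin n →₀ ℕ) : ℕ := α.sum fun _ e => e

/-- A set of exponent vectors is the set of monomials of a monomial ideal. -/
def IsMonIdeal {n : ℕ} (S : Set (Fin n →₀ ℕ)) : Prop :=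
  ∀ α ∈ S, ∀ β : Fin n →₀ ℕ, α + β ∈ S

/-- `α` is a minimal monomial generator of the monomial ideal with monomials `S`. -/
def MinGen {n : ℕ} (S : Set (Fin n →₀ ℕ)) (α : Fin n →₀ ℕ) : Prop :=
  α ∈ S ∧ ∀ β ∈ S, β ≤ α → β = α

/-- Stable monomial ideal (variables ordered `x_1 ≻ ⋯ ≻ x_n`, i.e. index `0` largest). -/
def IsStable {n : ℕ} (S : Set (Fin n →₀ ℕ)) : Prop :=
  ∀ α ∈ S, ∀ m ∈ α.support, (∀ k ∈ α.support, k ≤ m) →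
    ∀ i : Fin n, i < m → α - Finsupp.single m 1 + Finsupp.single i 1 ∈ S

def IsStronglyStable {n : ℕ} (S : Set (Fin n →₀ ℕ)) : Prop :=
  ∀ α ∈ S, ∀ i ∈ α.support, ∀ j : Fin n, j < i →
    α - Finsupp.single i 1 + Finsupp.single j 1 ∈ S

/-- `drlLT α β` : `α` is smaller than `β` in degrevlex with `x_1 ≻ ⋯ ≻ x_n`. -/
def drlLT {n : ℕ} (α β : Fin n →₀ ℕ) : Prop :=
  mdeg α < mdeg β ∨ (mdeg α = mdeg β ∧ ∃ i : Fin n, β i < α i ∧ ∀ j : Fin n, i < j → α j = β j)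

def IsAlmostRevLex {n : ℕ} (S : Set (Fin n →₀ ℕ)) : Prop :=
  IsMonIdeal S ∧ ∀ α, MinGen S α → ∀ β : Fin n →₀ ℕ, mdeg β = mdeg α → drlLT α β → β ∈ S

/-- Combinatorial Hilbert function of `R/J`: number of degree-`t` monomials outside `S`. -/
noncomputable def hilbC {n : ℕ} (S : Set (Fin n →₀ ℕ)) (t : ℕ) : ℕ :=
  {α : Fin n →₀ ℕ | mdeg α = t ∧ α ∉ S}.ncard

/-- `fdiff H s t` is `Δ^s H (t)` with the convention `Δ^s H (0) = 1` for `s ≥ 1`. -/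
def fdiff (H : ℕ → ℕ) : ℕ → ℕ → ℤ
  | 0, t => H t
  | _+1, 0 => 1
  | s+1, t+1 => fdiff H s (t+1) - fdiff H s t

/-!
Write `A_s(t)` for the standard monomials of degree `t` in `x_1, …, x_{n-s}`. Sorting `A_s(t+1)`
by whether `x_{n-s}` divides gives `|A_s(t+1)| ≤ |A_{s+1}(t+1)| + |A_s(t)|`, and the almost revlex
property turns this into an equality as long as `A_{s+1}(t+1) ≠ ∅`: then multiplying a standard
monomial by the last variable `x_{n-s}` keeps it standard. By induction on `s`, `Δ^s H(t) = |A_s(t)|`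
while these sets are nonempty, and `Δ^s H ≤ 0` at the first degree where they are empty. Finally
`x_{n-s}^t ∈ A_s(t)` for `t ≤ r_s`, while the minimal generator `x_{n-s}^{r_s+1}` is the smallest
monomial of its degree in `x_1, …, x_{n-s}` for degrevlex, so `A_s(r_s+1) = ∅`.
-/

open Finsupp

section Monomials

variable {n : ℕ}

@[simp]
lemma mdeg_add (α β : Fin n →₀ ℕ) : mdeg (α + β) = mdeg α + mdeg β :=
  map_add degree α β

@[simp]
lemma mdeg_single (i : Fin n) (e : ℕ) : mdeg (single i e) = e :=
  degree_single i e

lemma mdeg_eq_zero_iff {α : Fin n →₀ ℕ} : mdeg α = 0 ↔ α = 0 :=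
  degree_eq_zero_iff α

lemma apply_le_mdeg (α : Fin n →₀ ℕ) (i : Fin n) : α i ≤ mdeg α :=
  le_degree i α

lemma mdeg_tsub_add {α β : Fin n →₀ ℕ} (h : β ≤ α) : mdeg (α - β) + mdeg β = mdeg α := by
  rw [← mdeg_add, tsub_add_cancel_of_le h]

lemma eq_of_le_of_mdeg_eq {α β : Fin n →₀ ℕ} (h : β ≤ α) (hd : mdeg β = mdeg α) : β = α := by
  have hzero : mdeg (α - β) = 0 := by have := mdeg_tsub_add h; omega
  rw [← tsub_add_cancel_of_le h, mdeg_eq_zero_iff.mp hzero, zero_add]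

end Monomials

section MonomialIdeal

variable {n : ℕ} {S : Set (Fin n →₀ ℕ)}

lemma IsMonIdeal.mem_of_le (hS : IsMonIdeal S) {α β : Fin n →₀ ℕ} (hα : α ∈ S) (h : α ≤ β) :
    β ∈ S := by
  simpa [add_tsub_cancel_of_le h] using hS α hα (β - α)

lemma exists_minGen_le {β : Fin n →₀ ℕ} (hβ : β ∈ S) : ∃ τ, MinGen S τ ∧ τ ≤ β := by
  obtain ⟨τ, ⟨hτS, hτβ⟩, hmin⟩ :=
    wellFounded_lt.has_min {γ | γ ∈ S ∧ γ ≤ β} ⟨β, hβ, le_rfl⟩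
  refine ⟨τ, ⟨hτS, fun γ hγ hγτ => ?_⟩, hτβ⟩
  by_contra hne
  exact hmin γ ⟨hγ, hγτ.trans hτβ⟩ (lt_of_le_of_ne hγτ hne)

lemma minGen_single {i : Fin n} {d : ℕ} (hd : single i d ∈ S) (hlt : ∀ e < d, single i e ∉ S) :
    MinGen S (single i d) := by
  refine ⟨hd, fun β hβ hle => ?_⟩
  have hβ_eq : β = single i (β i) :=
    support_subset_singleton.mp ((support_mono hle).trans support_single_subset)
  have hβi : β i ≤ d := by simpa using hle i
  rcases hβi.lt_or_eq with h | h
  · exact absurd (hβ_eq ▸ hβ) (hlt _ h)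
  · rw [hβ_eq, h]

lemma IsAlmostRevLex.mem_of_minGen (hS : IsAlmostRevLex S) {τ μ : Fin n →₀ ℕ}
    (hτ : MinGen S τ) (hd : mdeg μ = mdeg τ) (i : Fin n) (hi : μ i < τ i)
    (habove : ∀ j, i < j → τ j = μ j) : μ ∈ S :=
  hS.2 τ hτ μ hd (Or.inr ⟨hd.symm, i, hi, habove⟩)

lemma apply_eq_succ_of_le_add_single (hS : IsMonIdeal S) {α τ : Fin n →₀ ℕ} {i : Fin n}
    (hα : α ∉ S) (hτ : τ ∈ S) (hτβ : τ ≤ α + single i 1) : τ i = α i + 1 := by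
  have hτβ' : ∀ j, τ j ≤ α j + if i = j then 1 else 0 := by
    simpa [Finsupp.le_def, single_apply] using hτβ
  refine le_antisymm (by simpa using hτβ' i) (not_lt.mp fun hlt => hα ?_)
  refine hS.mem_of_le hτ fun j => ?_
  have := hτβ' j
  split_ifs at this with h <;> [subst h; skip] <;> omega

/-- A minimal generator properly dividing `α · x_i` misses some variable `x_j` of it, `j < i`;
trading `x_i` for `x_j` gives a monomial it beats in degrevlex, and that monomial divides `α`. -/
lemma IsAlmostRevLex.mem_of_minGen_lt_add_single (hS : IsAlmostRevLex S) {α τ : Fin n →₀ ℕ}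
    {i : Fin n} (hαz : ∀ j, i < j → α j = 0) (hτ : MinGen S τ) (hτβ : τ < α + single i 1) :
    α ∈ S := by
  by_contra hαS
  have hτi := apply_eq_succ_of_le_add_single hS.1 hαS hτ.1 hτβ.le
  have hτβ' : ∀ j, τ j ≤ α j + if i = j then 1 else 0 := by
    simpa [Finsupp.le_def, single_apply] using hτβ.le
  obtain ⟨j, hj⟩ : ∃ j, τ j < α j + if i = j then 1 else 0 := by
    by_contra! h
    exact hτβ.not_ge fun j => by simpa [single_apply] using h j
  have hji : j < i := by
    rcases lt_trichotomy j i with h | rfl | h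
    · exact h
    · simp [hτi] at hj
    · simp [hαz j h, Fin.ne_of_lt h] at hj
  have hxi : single i 1 ≤ τ := single_le_iff.mpr (by omega)
  set τ' := τ - single i 1 + single j 1
  have hτ'_apply : ∀ k, τ' k = τ k - (if i = k then 1 else 0) + if j = k then 1 else 0 := by
    simp [τ', single_apply]
  refine hαS (hS.1.mem_of_le (hS.mem_of_minGen hτ (μ := τ') ?_ i ?_ ?_) fun k => ?_)
  · have := mdeg_tsub_add hxi
    simp only [τ', mdeg_add, mdeg_single] at this ⊢
    omega
  · simp [hτ'_apply, Fin.ne_of_lt hji, hτi]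
  · intro k hk
    simp [hτ'_apply, Fin.ne_of_lt hk, Fin.ne_of_lt (hji.trans hk)]
  · rw [hτ'_apply]
    rcases eq_or_ne i k with rfl | hik
    · simp [Fin.ne_of_lt hji, hτi]
    rcases eq_or_ne j k with rfl | hjk
    · simp [hik] at hj ⊢
      omega
    · simpa [hik, hjk] using hτβ' k

end MonomialIdeal

section StandardMonomials

variable {n : ℕ} {S : Set (Fin n →₀ ℕ)}

/-- Its cardinality is the Hilbert function of `R / (J + (x_{k+1}, …, x_n))` in degree `t`. -/
def stdMonomials (S : Set (Fin n →₀ ℕ)) (k t : ℕ) : Set (Fin n →₀ ℕ) :=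
  {α | mdeg α = t ∧ α ∉ S ∧ ∀ j : Fin n, k ≤ j → α j = 0}

lemma stdMonomials_finite (k t : ℕ) : (stdMonomials S k t).Finite :=
  (finite_of_degree_eq t).subset fun _ hα => hα.1

lemma stdMonomials_mono {k l : ℕ} (h : k ≤ l) (t : ℕ) :
    stdMonomials S k t ⊆ stdMonomials S l t :=
  fun _ ⟨hd, hS, hz⟩ => ⟨hd, hS, fun j hj => hz j (h.trans hj)⟩

lemma stdMonomials_self (t : ℕ) : stdMonomials S n t = {α | mdeg α = t ∧ α ∉ S} := by
  ext α
  simp only [stdMonomials, Set.mem_ofPred_eq]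
  exact ⟨fun h => ⟨h.1, h.2.1⟩, fun h => ⟨h.1, h.2, fun j hj => absurd j.isLt (not_lt.mpr hj)⟩⟩

lemma ncard_stdMonomials_zero {k : ℕ} (hne : (stdMonomials S k 0).Nonempty) :
    (stdMonomials S k 0).ncard = 1 := by
  obtain ⟨α, hα⟩ := hne
  obtain rfl : α = 0 := mdeg_eq_zero_iff.mp hα.1
  exact Set.ncard_eq_one.mpr
    ⟨0, Set.eq_singleton_iff_unique_mem.mpr ⟨hα, fun β hβ => mdeg_eq_zero_iff.mp hβ.1⟩⟩

lemma single_mem_stdMonomials {i : Fin n} {t : ℕ} (h : single i t ∉ S) :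
    single i t ∈ stdMonomials S (i + 1) t :=
  ⟨mdeg_single i t, h, fun j hj => single_eq_of_ne (by omega)⟩

lemma stdMonomials_eq_empty_of_minGen_single (hS : IsAlmostRevLex S) {i : Fin n} {d : ℕ}
    (hgen : MinGen S (single i d)) : stdMonomials S (i + 1) d = ∅ := by
  refine Set.eq_empty_iff_forall_notMem.mpr fun α ⟨hdeg, hα, hz⟩ => hα ?_
  rcases (hdeg ▸ apply_le_mdeg α i).lt_or_eq with hlt | heq
  · refine hS.mem_of_minGen hgen (by simpa using hdeg) i (by simpa using hlt) fun j hj => ?_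
    rw [single_eq_of_ne (Fin.ne_of_lt hj).symm, hz j hj]
  · have hle : single i d ≤ α := single_le_iff.mpr heq.ge
    rw [← eq_of_le_of_mdeg_eq hle (by simpa using hdeg.symm)]
    exact hgen.1

lemma add_single_notMem (hS : IsAlmostRevLex S) {i : Fin n} {t : ℕ} {α : Fin n →₀ ℕ}
    (hα : α ∈ stdMonomials S (i + 1) t) (hne : (stdMonomials S i (t + 1)).Nonempty) :
    α + single i 1 ∉ S := by
  obtain ⟨hαdeg, hαS, hαz⟩ := hα
  obtain ⟨γ, hγdeg, hγS, hγz⟩ := hne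
  intro hβ
  obtain ⟨τ, hτ, hτβ⟩ := exists_minGen_le hβ
  have hτi := apply_eq_succ_of_le_add_single hS.1 hαS hτ.1 hτβ
  rcases hτβ.lt_or_eq with hlt | rfl
  · exact hαS (hS.mem_of_minGen_lt_add_single hαz hτ hlt)
  · -- `γ`, which does not involve `x_i`, beats the generator `α · x_i` in degrevlex
    refine hγS (hS.mem_of_minGen hτ (by simp [hαdeg, hγdeg]) i
      (by rw [hγz i le_rfl, hτi]; omega) fun j hj => ?_)
    rw [Finsupp.add_apply, single_eq_of_ne (Fin.ne_of_lt hj).symm, hαz j hj, hγz j hj.le,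
      add_zero]

lemma stdMonomials_succ_eq (hS : IsMonIdeal S) (i : Fin n) (t : ℕ) :
    stdMonomials S (i + 1) (t + 1) = stdMonomials S i (t + 1) ∪
      (· + single i 1) '' {β ∈ stdMonomials S (i + 1) t | β + single i 1 ∉ S} := by
  ext α
  constructor
  · rintro ⟨hdeg, hαS, hz⟩
    by_cases hαi : α i = 0
    · refine Or.inl ⟨hdeg, hαS, fun j hj => ?_⟩
      rcases hj.lt_or_eq with h | h
      · exact hz j h
      · rwa [← Fin.ext h]
    · have hxi : single i 1 ≤ α := single_le_iff.mpr (by omega)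
      refine Or.inr ⟨α - single i 1, ⟨⟨?_, fun h => hαS (hS.mem_of_le h tsub_le_self), ?_⟩, ?_⟩, ?_⟩
      · have := mdeg_tsub_add hxi
        simp only [mdeg_single] at this
        omega
      · intro j hj
        simp [hz j hj]
      · rwa [tsub_add_cancel_of_le hxi]
      · exact tsub_add_cancel_of_le hxi
  · rintro (⟨hdeg, hαS, hz⟩ | ⟨β, ⟨⟨hdeg, -, hz⟩, hβS⟩, rfl⟩)
    · exact ⟨hdeg, hαS, fun j hj => hz j (by omega)⟩
    · refine ⟨by simp [hdeg], hβS, fun j hj => ?_⟩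
      rw [Finsupp.add_apply, hz j hj, single_eq_of_ne (by omega), add_zero]

lemma ncard_stdMonomials_succ_le (hS : IsMonIdeal S) (i : Fin n) (t : ℕ) :
    (stdMonomials S (i + 1) (t + 1)).ncard ≤
      (stdMonomials S i (t + 1)).ncard + (stdMonomials S (i + 1) t).ncard := by
  rw [stdMonomials_succ_eq hS]
  have hsub : {β ∈ stdMonomials S (i + 1) t | β + single i 1 ∉ S} ⊆ stdMonomials S (i + 1) t :=
    Set.sep_subset _ _
  calc _ ≤ _ := Set.ncard_union_le _ _
    _ ≤ _ := Nat.add_le_add_left ((Set.ncard_image_le ((stdMonomials_finite _ _).subset hsub)).trans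
        (Set.ncard_le_ncard hsub (stdMonomials_finite _ _))) _

lemma ncard_stdMonomials_succ_eq (hS : IsAlmostRevLex S) {i : Fin n} {t : ℕ}
    (hne : (stdMonomials S i (t + 1)).Nonempty) :
    (stdMonomials S (i + 1) (t + 1)).ncard =
      (stdMonomials S i (t + 1)).ncard + (stdMonomials S (i + 1) t).ncard := by
  have hsep : {β ∈ stdMonomials S (i + 1) t | β + single i 1 ∉ S} = stdMonomials S (i + 1) t :=
    Set.sep_eq_self_iff_mem_true.mpr fun β hβ => add_single_notMem hS hβ hne
  have hdisj : Disjoint (stdMonomials S i (t + 1))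
      ((· + single i 1) '' stdMonomials S (i + 1) t) := by
    refine Set.disjoint_left.mpr fun α hα ⟨β, _, hβα⟩ => ?_
    have := hα.2.2 i le_rfl
    simp [← hβα] at this
  rw [stdMonomials_succ_eq hS.1, hsep, Set.ncard_union_eq hdisj (stdMonomials_finite _ _)
    ((stdMonomials_finite _ _).image _), Set.ncard_image_of_injective _ (add_left_injective _)]

end StandardMonomials

section FiniteDifferences

lemma fdiff_succ_one (H : ℕ → ℕ) (s : ℕ) : fdiff H (s + 1) 1 = H 1 - H 0 - s := by
  induction s with
  | zero => simp [fdiff]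
  | succ s ih =>
    change fdiff H (s + 1) 1 - 1 = _
    rw [ih]
    push_cast
    ring

lemma fdiff_hilbC_eq_ncard {n : ℕ} {S : Set (Fin n →₀ ℕ)} (hS : IsAlmostRevLex S) {s : ℕ}
    (hs : s < n) {T : ℕ} (hne : ∀ t ≤ T, (stdMonomials S (n - s) t).Nonempty) :
    (∀ t ≤ T, fdiff (hilbC S) s t = (stdMonomials S (n - s) t).ncard) ∧
      fdiff (hilbC S) s (T + 1) ≤ (stdMonomials S (n - s) (T + 1)).ncard := by
  induction s with
  | zero =>
    simp only [Nat.sub_zero, stdMonomials_self]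
    exact ⟨fun t _ => rfl, le_rfl⟩
  | succ s ih =>
    set i : Fin n := ⟨n - (s + 1), by omega⟩
    have hi : n - s = i + 1 := by simp only [i]; omega
    obtain ⟨ih_eq, ih_le⟩ := ih (by omega) fun t ht =>
      (hne t ht).mono (stdMonomials_mono (by omega) t)
    rw [hi] at ih_eq ih_le
    refine ⟨fun t ht => ?_, ?_⟩
    · cases t with
      | zero => simp [fdiff, ncard_stdMonomials_zero (hne 0 ht)]
      | succ t =>
        change fdiff (hilbC S) s (t + 1) - fdiff (hilbC S) s t = _
        rw [ih_eq (t + 1) ht, ih_eq t (by omega), ncard_stdMonomials_succ_eq hS (hne (t + 1) ht)]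
        push_cast
        ring
    · change fdiff (hilbC S) s (T + 1) - fdiff (hilbC S) s T ≤
        ((stdMonomials S i (T + 1)).ncard : ℤ)
      have hsplit : ((stdMonomials S (i + 1) (T + 1)).ncard : ℤ) ≤
          (stdMonomials S i (T + 1)).ncard + (stdMonomials S (i + 1) T).ncard :=
        mod_cast ncard_stdMonomials_succ_le hS.1 i T
      rw [ih_eq T le_rfl]
      linarith

end FiniteDifferences

lemma eq_of_pos_of_succ_nonpos {f : ℕ → ℤ} {a b : ℕ} (ha : ∀ j ≤ a, 0 < f j)
    (ha' : f (a + 1) ≤ 0) (hb : ∀ j ≤ b, 0 < f j) (hb' : f (b + 1) ≤ 0) : a = b := by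
  by_contra hne
  rcases Nat.lt_or_gt_of_ne hne with h | h
  · exact (hb (a + 1) h).not_ge ha'
  · exact (ha (b + 1) h).not_ge hb'

/-- For an Artinian almost revlex ideal `J ⊂ K[x_1,…,x_n]` with Hilbert function `H`, the
`s`-reduction number `r_s = min{t : x_{n-s}^{t+1} ∈ J}` (the variable `x_{n-s}` having
`0`-based index `n-1-s`) equals `c_s(H) = max{c : Δ^s H(j) > 0 for all 0 ≤ j ≤ c}`, for every
`0 ≤ s ≤ n-1`. -/
theorem reduction_number_eq_c {n : ℕ} (hn : 1 ≤ n)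
    (S : Set (Fin n →₀ ℕ)) (hS : IsAlmostRevLex S) :
    ∀ s, s ≤ n - 1 → ∀ r c : ℕ,
      (Finsupp.single (⟨n - 1 - s, by omega⟩ : Fin n) (r + 1) ∈ S ∧
        ∀ t, Finsupp.single (⟨n - 1 - s, by omega⟩ : Fin n) (t + 1) ∈ S → r ≤ t) →
      ((∀ j ≤ c, 0 < fdiff (hilbC S) s j) ∧ fdiff (hilbC S) s (c + 1) ≤ 0) →
      r = c := by
  rintro s hs r c ⟨hr, hr_min⟩ ⟨hc, hc_succ⟩
  set i : Fin n := ⟨n - 1 - s, by omega⟩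
  by_cases h0 : (0 : Fin n →₀ ℕ) ∈ S
  · have hS_univ : ∀ α, α ∈ S := fun α => hS.1.mem_of_le h0 (zero_le (a := α))
    have hH : ∀ t, hilbC S t = 0 := by simp [hilbC, hS_univ]
    obtain rfl : r = 0 := Nat.le_zero.mp (hr_min 0 (hS_univ _))
    cases s with
    | zero => simpa [fdiff, hH] using hc 0 c.zero_le
    | succ s =>
      exact eq_of_pos_of_succ_nonpos (by simp [fdiff]) (by simp [fdiff_succ_one, hH]) hc hc_succ
  · have hpow : ∀ t ≤ r, single i t ∉ S := fun t ht hmem => by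
      cases t with
      | zero => exact h0 (by simpa using hmem)
      | succ t => exact absurd (hr_min t hmem) (by omega)
    have hk : n - s = i + 1 := by simp only [i]; omega
    have hne : ∀ t ≤ r, (stdMonomials S (n - s) t).Nonempty :=
      fun t ht => ⟨single i t, hk ▸ single_mem_stdMonomials (hpow t ht)⟩
    have hempty : stdMonomials S (n - s) (r + 1) = ∅ := hk ▸
      stdMonomials_eq_empty_of_minGen_single hS (minGen_single hr fun e he => hpow e (by omega))
    obtain ⟨h_eq, h_le⟩ := fdiff_hilbC_eq_ncard hS (by omega : s < n) hne
    refine eq_of_pos_of_succ_nonpos (fun t ht => ?_) (by simpa [hempty] using h_le) hc hc_succ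
    rw [h_eq t ht]
    exact_mod_cast (hne t ht).ncard_pos (stdMonomials_finite _ _)
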